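/- arXiv:2302.11898 — 7 statements merged into one kernel-verified Lean document; each statement's English description precedes it below -/
import Mathlib

section
/- Let x : ℝ → E be a GDAM trajectory, i.e. x has derivative x'(t) = s_ζ(x(t)) at every t in an interval I, where ∇f(x(t)) ≠ 0 and ∇g(x(t)) ≠ 0 on I. Then for every t ∈ I the composite t ↦ f(x(t)) is differentiable with derivative (d/dt) f(x(t)) = −‖∇f(x(t))‖ · (1 + ζ · cos θ(x(t))). -/
open RealInnerProductSpace

theorem HasGradientAt.comp_hasDerivAt {F : Type*} [NormedAddCommGroup F]
    [InnerProductSpace ℝ F] [CompleteSpace F] {f : F → ℝ} {f' : F} {x : ℝ → F} {x' : F} {t : ℝ}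
    (hf : HasGradientAt f f' (x t)) (hx : HasDerivAt x x' t) :
    HasDerivAt (fun s => f (x s)) ⟪f', x'⟫ t :=
  hf.hasFDerivAt.comp_hasDerivAt t hx

theorem inner_neg_normalize_sub_smul_normalize {F : Type*} [NormedAddCommGroup F]
    [InnerProductSpace ℝ F] (a b : F) (ζ : ℝ) :
    ⟪a, -(‖a‖⁻¹ • a) - ζ • (‖b‖⁻¹ • b)⟫ = -‖a‖ * (1 + ζ * (⟪a, b⟫ / (‖a‖ * ‖b‖))) := by
  rcases eq_or_ne a 0 with rfl | ha
  · simp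
  have hna : ‖a‖ ≠ 0 := norm_ne_zero_iff.mpr ha
  simp only [inner_sub_right, inner_neg_right, inner_smul_right, real_inner_self_eq_norm_sq]
  field_simp
  ring

theorem gdam_deriv_f_general {n : ℕ}
    (f g : EuclideanSpace ℝ (Fin n) → ℝ)
    (hf : ContDiff ℝ 2 f)
    (ζ : ℝ)
    (x : ℝ → EuclideanSpace ℝ (Fin n)) (I : Set ℝ)
    (hx : ∀ t ∈ I, HasDerivAt x
      (-(‖gradient f (x t)‖⁻¹ • gradient f (x t))
        - ζ • (‖gradient g (x t)‖⁻¹ • gradient g (x t))) t) :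
    ∀ t ∈ I, HasDerivAt (fun t => f (x t))
      (-‖gradient f (x t)‖ *
        (1 + ζ * (⟪gradient f (x t), gradient g (x t)⟫ /
          (‖gradient f (x t)‖ * ‖gradient g (x t)‖)))) t := by
  intro t ht
  have hgrad : HasGradientAt f (gradient f (x t)) (x t) :=
    (hf.differentiable two_ne_zero (x t)).hasGradientAt
  rw [← inner_neg_normalize_sub_smul_normalize]
  exact hgrad.comp_hasDerivAt (hx t ht)

/-- Along a GDAM trajectory, the objective satisfies
`(d/dt) f(x(t)) = -‖∇f(x(t))‖ (1 + ζ cos θ(x(t)))`. -/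
theorem gdam_deriv_f {n : ℕ}
    (f g : EuclideanSpace ℝ (Fin n) → ℝ)
    (hf : ContDiff ℝ 2 f) (hg : ContDiff ℝ 2 g)
    (ζ : ℝ) (hζ : ζ ∈ Set.Ico (0 : ℝ) 1)
    (x : ℝ → EuclideanSpace ℝ (Fin n)) (I : Set ℝ)
    (hgf : ∀ t ∈ I, gradient f (x t) ≠ 0)
    (hgg : ∀ t ∈ I, gradient g (x t) ≠ 0)
    (hx : ∀ t ∈ I, HasDerivAt x
      (-(‖gradient f (x t)‖⁻¹ • gradient f (x t))
        - ζ • (‖gradient g (x t)‖⁻¹ • gradient g (x t))) t) :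
    ∀ t ∈ I, HasDerivAt (fun t => f (x t))
      (-‖gradient f (x t)‖ *
        (1 + ζ * (⟪gradient f (x t), gradient g (x t)⟫ /
          (‖gradient f (x t)‖ * ‖gradient g (x t)‖)))) t :=
  gdam_deriv_f_general f g hf ζ x I hx
end

section
/- (Boundedness lemma.) Let ζ ∈ [0,1) and let x : ℝ → E be a GDAM trajectory on [0,T), i.e. x'(t) = s_ζ(x(t)) with ∇f(x(t)) ≠ 0 and ∇g(x(t)) ≠ 0 for all t ∈ [0,T). Then t ↦ f(x(t)) is monotone nonincreasing on [0,T); in particular f(x(t)) ≤ f(x(0)) for all t ∈ [0,T), so the trajectory remains in the sublevel set B = {y : f(y) ≤ f(x(0))}. -/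
/-!
Along the flow, `d/dt f(x t) = ⟪∇f, s_ζ⟫ = -‖∇f‖ - ζ ⟪∇f, ∇g/‖∇g‖⟫ ≤ -(1 - |ζ|) ‖∇f‖ ≤ 0`
by Cauchy–Schwarz, so `f ∘ x` is antitone by the mean value theorem.
-/

open RealInnerProductSpace

section InnerProduct

variable {F : Type*} [NormedAddCommGroup F] [InnerProductSpace ℝ F]

theorem HasGradientAt.comp_hasDerivAt_real [CompleteSpace F] {f : F → ℝ} {f' : F} {x : ℝ → F}
    {x' : F} {t : ℝ} (hf : HasGradientAt f f' (x t)) (hx : HasDerivAt x x' t) :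
    HasDerivAt (fun s => f (x s)) ⟪f', x'⟫ t :=
  hf.hasFDerivAt.comp_hasDerivAt t hx

theorem real_inner_inv_norm_smul_self (u : F) : ⟪u, ‖u‖⁻¹ • u⟫ = ‖u‖ := by
  rw [real_inner_smul_right, real_inner_self_eq_norm_sq]
  rcases eq_or_ne ‖u‖ 0 with h | h
  · simp [h]
  · field_simp

theorem abs_real_inner_inv_norm_smul_le (u w : F) : |⟪u, ‖w‖⁻¹ • w⟫| ≤ ‖u‖ := by
  rw [real_inner_smul_right, abs_mul, abs_inv, abs_norm]
  rcases eq_or_ne ‖w‖ 0 with h | h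
  · simp [h]
  · rw [inv_mul_le_iff₀ (by positivity), mul_comm]
    exact abs_real_inner_le_norm u w

theorem real_inner_gdam_direction_le (ζ : ℝ) (u w : F) :
    ⟪u, -(‖u‖⁻¹ • u) - ζ • (‖w‖⁻¹ • w)⟫ ≤ -(1 - |ζ|) * ‖u‖ := by
  rw [inner_sub_right, inner_neg_right, real_inner_inv_norm_smul_self, real_inner_smul_right]
  calc -‖u‖ - ζ * ⟪u, ‖w‖⁻¹ • w⟫ ≤ -‖u‖ + |ζ| * |⟪u, ‖w‖⁻¹ • w⟫| := by
        rw [← abs_mul]; linarith [neg_abs_le (ζ * ⟪u, ‖w‖⁻¹ • w⟫)]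
    _ ≤ -‖u‖ + |ζ| * ‖u‖ := by gcongr; exact abs_real_inner_inv_norm_smul_le u w
    _ = -(1 - |ζ|) * ‖u‖ := by ring

theorem real_inner_gdam_direction_nonpos {ζ : ℝ} (hζ : |ζ| ≤ 1) (u w : F) :
    ⟪u, -(‖u‖⁻¹ • u) - ζ • (‖w‖⁻¹ • w)⟫ ≤ 0 :=
  (real_inner_gdam_direction_le ζ u w).trans <|
    mul_nonpos_of_nonpos_of_nonneg (by linarith) (norm_nonneg u)

end InnerProduct

theorem antitoneOn_of_hasDerivAt_nonpos {D : Set ℝ} (hD : Convex ℝ D) {φ φ' : ℝ → ℝ}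
    (hφ : ∀ t ∈ D, HasDerivAt φ (φ' t) t) (hφ' : ∀ t ∈ D, φ' t ≤ 0) : AntitoneOn φ D :=
  antitoneOn_of_hasDerivWithinAt_nonpos hD
    (fun t ht => (hφ t ht).continuousAt.continuousWithinAt)
    (fun t ht => (hφ t (interior_subset ht)).hasDerivWithinAt)
    (fun t ht => hφ' t (interior_subset ht))

theorem gdam_boundedness_general {n : ℕ}
    (f g : EuclideanSpace ℝ (Fin n) → ℝ)
    (hf : ContDiff ℝ 2 f)
    (ζ : ℝ) (hζ : ζ ∈ Set.Ico (0 : ℝ) 1)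
    (T : ℝ) (x : ℝ → EuclideanSpace ℝ (Fin n))
    (hx : ∀ t ∈ Set.Ico (0 : ℝ) T, HasDerivAt x
      (-(‖gradient f (x t)‖⁻¹ • gradient f (x t))
        - ζ • (‖gradient g (x t)‖⁻¹ • gradient g (x t))) t) :
    AntitoneOn (fun t => f (x t)) (Set.Ico (0 : ℝ) T) ∧
      ∀ t ∈ Set.Ico (0 : ℝ) T, x t ∈ {y | f y ≤ f (x 0)} := by
  have hfd : Differentiable ℝ f := hf.differentiable (by norm_num)
  have habs : |ζ| ≤ 1 := abs_le.mpr ⟨by linarith [hζ.1], hζ.2.le⟩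
  have hmono : AntitoneOn (fun t => f (x t)) (Set.Ico (0 : ℝ) T) :=
    antitoneOn_of_hasDerivAt_nonpos (convex_Ico 0 T)
      (fun t ht => (hfd (x t)).hasGradientAt.comp_hasDerivAt_real (hx t ht))
      (fun _ _ => real_inner_gdam_direction_nonpos habs _ _)
  exact ⟨hmono, fun t ht => hmono (Set.left_mem_Ico.mpr (ht.1.trans_lt ht.2)) ht ht.1⟩

/-- Boundedness lemma: along a GDAM trajectory on `[0,T)`, the
objective `t ↦ f(x(t))` is nonincreasing; in particular the trajectory stays
in the sublevel set `{y : f y ≤ f (x 0)}`. -/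
theorem gdam_boundedness {n : ℕ}
    (f g : EuclideanSpace ℝ (Fin n) → ℝ)
    (hf : ContDiff ℝ 2 f) (hg : ContDiff ℝ 2 g)
    (ζ : ℝ) (hζ : ζ ∈ Set.Ico (0 : ℝ) 1)
    (T : ℝ) (x : ℝ → EuclideanSpace ℝ (Fin n))
    (hgf : ∀ t ∈ Set.Ico (0 : ℝ) T, gradient f (x t) ≠ 0)
    (hgg : ∀ t ∈ Set.Ico (0 : ℝ) T, gradient g (x t) ≠ 0)
    (hx : ∀ t ∈ Set.Ico (0 : ℝ) T, HasDerivAt x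
      (-(‖gradient f (x t)‖⁻¹ • gradient f (x t))
        - ζ • (‖gradient g (x t)‖⁻¹ • gradient g (x t))) t) :
    AntitoneOn (fun t => f (x t)) (Set.Ico (0 : ℝ) T) ∧
      ∀ t ∈ Set.Ico (0 : ℝ) T, x t ∈ {y | f y ≤ f (x 0)} :=
  gdam_boundedness_general f g hf ζ hζ T x hx
end

section
/- (Lipschitz continuity of the GDAM field.) Let E = EuclideanSpace ℝ (Fin n), let S ⊆ E, and let f, g : E → ℝ be differentiable. Suppose the gradient maps ∇f and ∇g are Lipschitz on S with constants L_f and L_g respectively, and that there exist a, b > 0 with ‖∇f(y)‖ ≥ a and ‖∇g(y)‖ ≥ b for every y ∈ S. Then for every ζ ∈ [0,1] the GDAM vector field s_ζ(y) = −∇f(y)/‖∇f(y)‖ − ζ·∇g(y)/‖∇g(y)‖ is Lipschitz on S, i.e. there exists L > 0 with ‖s_ζ(y) − s_ζ(z)‖ ≤ L‖y − z‖ for all y, z ∈ S. -/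
/-!
On `{u | a ≤ ‖u‖}` the normalization `u ↦ ‖u‖⁻¹ • u` is `2 / a`-Lipschitz, because
`‖u‖⁻¹ • u - ‖v‖⁻¹ • v = ‖u‖⁻¹ • (u - v) + (‖u‖⁻¹ - ‖v‖⁻¹) • v` and both terms have norm at most
`‖u - v‖ / a`. The lower bounds on `‖∇f‖` and `‖∇g‖` keep the gradients in such sets, so the
normalized gradients are Lipschitz on `S`, and so is their combination `s_ζ`.
-/

open NNReal

theorem LipschitzOnWith.const_smul {α M E : Type*} [PseudoEMetricSpace α] [SeminormedAddGroup M]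
    [SeminormedAddGroup E] [SMulZeroClass M E] [IsBoundedSMul M E] {K : ℝ≥0} {F : α → E}
    {s : Set α} (hF : LipschitzOnWith K F s) (c : M) :
    LipschitzOnWith (‖c‖₊ * K) (fun x ↦ c • F x) s :=
  (lipschitzWith_smul c).comp_lipschitzOnWith hF

theorem LipschitzOnWith.exists_pos_norm_sub_le {E F : Type*} [SeminormedAddCommGroup E]
    [SeminormedAddCommGroup F] {K : ℝ≥0} {G : E → F} {s : Set E} (hG : LipschitzOnWith K G s) :
    ∃ L > 0, ∀ y ∈ s, ∀ z ∈ s, ‖G y - G z‖ ≤ L * ‖y - z‖ := by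
  refine ⟨K + 1, by positivity, fun y hy z hz ↦ ?_⟩
  calc ‖G y - G z‖ ≤ K * ‖y - z‖ := by simpa only [dist_eq_norm] using hG.dist_le_mul y hy z hz
    _ ≤ (K + 1) * ‖y - z‖ := by gcongr; linarith

section Normalization

variable {E : Type*} [NormedAddCommGroup E] [NormedSpace ℝ E] {a : ℝ}

theorem norm_inv_norm_smul_sub_inv_norm_smul_le (ha : 0 < a) {u v : E} (hu : a ≤ ‖u‖)
    (hv : a ≤ ‖v‖) : ‖‖u‖⁻¹ • u - ‖v‖⁻¹ • v‖ ≤ 2 / a * ‖u - v‖ := by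
  have hu0 : 0 < ‖u‖ := ha.trans_le hu
  have hv0 : 0 < ‖v‖ := ha.trans_le hv
  have hsplit : ‖u‖⁻¹ • u - ‖v‖⁻¹ • v = ‖u‖⁻¹ • (u - v) + (‖u‖⁻¹ - ‖v‖⁻¹) • v := by
    rw [smul_sub, sub_smul]; abel
  have hfirst : ‖‖u‖⁻¹ • (u - v)‖ ≤ ‖u - v‖ / a := by
    rw [norm_smul, norm_inv, norm_norm, inv_mul_eq_div]; gcongr
  have hsecond : ‖(‖u‖⁻¹ - ‖v‖⁻¹) • v‖ ≤ ‖u - v‖ / a := by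
    have hcoeff : ‖(‖u‖⁻¹ - ‖v‖⁻¹) • v‖ = |‖u‖ - ‖v‖| / ‖u‖ := by
      rw [norm_smul, inv_sub_inv hu0.ne' hv0.ne', Real.norm_eq_abs, abs_div, abs_mul, abs_sub_comm,
        abs_of_pos hu0, abs_of_pos hv0]
      field_simp
    rw [hcoeff]
    gcongr
    exact abs_norm_sub_norm_le u v
  calc ‖‖u‖⁻¹ • u - ‖v‖⁻¹ • v‖ ≤ ‖u - v‖ / a + ‖u - v‖ / a :=
        hsplit ▸ norm_add_le_of_le hfirst hsecond
    _ = 2 / a * ‖u - v‖ := by ring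

theorem lipschitzOnWith_inv_norm_smul (ha : 0 < a) :
    LipschitzOnWith (2 / a).toNNReal (fun u : E ↦ ‖u‖⁻¹ • u) {u | a ≤ ‖u‖} :=
  LipschitzOnWith.of_dist_le' fun _ hu _ hv ↦ by
    simpa only [dist_eq_norm] using norm_inv_norm_smul_sub_inv_norm_smul_le ha hu hv

theorem LipschitzOnWith.inv_norm_smul {α : Type*} [PseudoEMetricSpace α] {K : ℝ≥0} {F : α → E}
    {s : Set α} (hF : LipschitzOnWith K F s) (ha : 0 < a) (hFa : ∀ y ∈ s, a ≤ ‖F y‖) :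
    LipschitzOnWith ((2 / a).toNNReal * K) (fun y ↦ ‖F y‖⁻¹ • F y) s :=
  (lipschitzOnWith_inv_norm_smul ha).comp hF hFa

end Normalization

theorem gdam_field_lipschitz_general {n : ℕ}
    (S : Set (EuclideanSpace ℝ (Fin n)))
    (f g : EuclideanSpace ℝ (Fin n) → ℝ)
    (Lf Lg a b : ℝ) (ha : 0 < a) (hb : 0 < b)
    (hlipf : ∀ y ∈ S, ∀ z ∈ S, ‖gradient f y - gradient f z‖ ≤ Lf * ‖y - z‖)
    (hlipg : ∀ y ∈ S, ∀ z ∈ S, ‖gradient g y - gradient g z‖ ≤ Lg * ‖y - z‖)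
    (hlowf : ∀ y ∈ S, a ≤ ‖gradient f y‖)
    (hlowg : ∀ y ∈ S, b ≤ ‖gradient g y‖)
    (ζ : ℝ) :
    ∃ L > 0, ∀ y ∈ S, ∀ z ∈ S,
      ‖(-(‖gradient f y‖⁻¹ • gradient f y)
          - ζ • (‖gradient g y‖⁻¹ • gradient g y))
        - (-(‖gradient f z‖⁻¹ • gradient f z)
          - ζ • (‖gradient g z‖⁻¹ • gradient g z))‖ ≤ L * ‖y - z‖ := by
  have hnormf := (LipschitzOnWith.of_dist_le' (by simpa only [dist_eq_norm] using hlipf)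
    ).inv_norm_smul ha hlowf
  have hnormg := (LipschitzOnWith.of_dist_le' (by simpa only [dist_eq_norm] using hlipg)
    ).inv_norm_smul hb hlowg
  exact (hnormf.neg.sub (hnormg.const_smul ζ)).exists_pos_norm_sub_le

/-- Lipschitz continuity of the GDAM field: if `∇f` and `∇g` are
Lipschitz on `S` and bounded below in norm by positive constants there, then
for every `ζ ∈ [0,1]` the GDAM vector field is Lipschitz on `S`. -/
theorem gdam_field_lipschitz {n : ℕ}
    (S : Set (EuclideanSpace ℝ (Fin n)))
    (f g : EuclideanSpace ℝ (Fin n) → ℝ)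
    (hf : Differentiable ℝ f) (hg : Differentiable ℝ g)
    (Lf Lg a b : ℝ) (ha : 0 < a) (hb : 0 < b)
    (hlipf : ∀ y ∈ S, ∀ z ∈ S, ‖gradient f y - gradient f z‖ ≤ Lf * ‖y - z‖)
    (hlipg : ∀ y ∈ S, ∀ z ∈ S, ‖gradient g y - gradient g z‖ ≤ Lg * ‖y - z‖)
    (hlowf : ∀ y ∈ S, a ≤ ‖gradient f y‖)
    (hlowg : ∀ y ∈ S, b ≤ ‖gradient g y‖)
    (ζ : ℝ) (hζ : ζ ∈ Set.Icc (0 : ℝ) 1) :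
    ∃ L > 0, ∀ y ∈ S, ∀ z ∈ S,
      ‖(-(‖gradient f y‖⁻¹ • gradient f y)
          - ζ • (‖gradient g y‖⁻¹ • gradient g y))
        - (-(‖gradient f z‖⁻¹ • gradient f z)
          - ζ • (‖gradient g z‖⁻¹ • gradient g z))‖ ≤ L * ‖y - z‖ :=
  gdam_field_lipschitz_general S f g Lf Lg a b ha hb hlipf hlipg hlowf hlowg ζ
end

section
/- (Upper bound on the time to reach the constraint boundary.) Let ζ ∈ [0,1) and let x : ℝ → E be a GDAM trajectory on [0,T♯], i.e. x'(t) = s_ζ(x(t)) with ∇f(x(t)) ≠ 0 and ∇g(x(t)) ≠ 0 on [0,T♯]. Suppose there are constants A, B > 0 with ‖∇f(x(t))‖ ≥ A and |f(x(t))| ≤ B for all t ∈ [0,T♯]. Then T♯ ≤ 2B / (A(1 − ζ)). -/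
open RealInnerProductSpace

/-!
Along the trajectory, `d/dt f(x(t)) = ⟪∇f, s_ζ⟫ ≤ -‖∇f‖ + ζ‖∇f‖ ≤ -A(1 - ζ)`, because
the normalized direction `∇g/‖∇g‖` has norm at most one. Hence `f ∘ x` decreases at rate
at least `A(1 - ζ)` on `[0, T♯]`, while it can only drop by `2B` since `|f ∘ x| ≤ B`.
-/

section

variable {E : Type*} [NormedAddCommGroup E] [InnerProductSpace ℝ E]

theorem inner_neg_normalize_sub_smul_normalize_le (u v : E) {ζ : ℝ} (hζ : 0 ≤ ζ) :
    ⟪u, -(‖u‖⁻¹ • u) - ζ • (‖v‖⁻¹ • v)⟫ ≤ -((1 - ζ) * ‖u‖) := by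
  have h_self : ⟪u, ‖u‖⁻¹ • u⟫ = ‖u‖ := by
    rw [real_inner_smul_right, real_inner_self_eq_norm_sq]
    rcases eq_or_ne ‖u‖ 0 with hu | hu
    · simp [hu]
    · field_simp
  have h_cross : -‖u‖ ≤ ⟪u, ‖v‖⁻¹ • v⟫ := by
    have hv : ‖‖v‖⁻¹ • v‖ ≤ 1 := by
      rw [norm_smul, norm_inv, norm_norm]
      exact inv_mul_le_one
    have := (abs_real_inner_le_norm u (‖v‖⁻¹ • v)).trans
      (mul_le_of_le_one_right (norm_nonneg u) hv)
    linarith [neg_abs_le ⟪u, ‖v‖⁻¹ • v⟫]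
  rw [inner_sub_right, inner_neg_right, h_self, real_inner_smul_right]
  nlinarith

theorem HasGradientAt.comp_hasDerivAt_inner [CompleteSpace E] {f : E → ℝ} {f' : E}
    {x : ℝ → E} {x' : E} {t : ℝ} (hf : HasGradientAt f f' (x t)) (hx : HasDerivAt x x' t) :
    HasDerivAt (fun s => f (x s)) ⟪f', x'⟫ t := by
  have h := hf.hasFDerivAt.comp_hasDerivAt t hx
  simp only [InnerProductSpace.toDual_apply_apply] at h
  exact h

end

theorem gdam_time_to_boundary_general {n : ℕ}
    (f g : EuclideanSpace ℝ (Fin n) → ℝ)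
    (hf : ContDiff ℝ 2 f)
    (ζ : ℝ) (hζ : ζ ∈ Set.Ico (0 : ℝ) 1)
    (Tsharp : ℝ) (hT : 0 ≤ Tsharp)
    (x : ℝ → EuclideanSpace ℝ (Fin n))
    (hx : ∀ t ∈ Set.Icc (0 : ℝ) Tsharp, HasDerivAt x
      (-(‖gradient f (x t)‖⁻¹ • gradient f (x t))
        - ζ • (‖gradient g (x t)‖⁻¹ • gradient g (x t))) t)
    (A B : ℝ) (hA : 0 < A)
    (hlow : ∀ t ∈ Set.Icc (0 : ℝ) Tsharp, A ≤ ‖gradient f (x t)‖)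
    (hbound : ∀ t ∈ Set.Icc (0 : ℝ) Tsharp, |f (x t)| ≤ B) :
    Tsharp ≤ 2 * B / (A * (1 - ζ)) := by
  obtain ⟨hζ0, hζ1⟩ := hζ
  have hderiv : ∀ t ∈ Set.Icc 0 Tsharp, HasDerivAt (fun s => f (x s))
      ⟪gradient f (x t), -(‖gradient f (x t)‖⁻¹ • gradient f (x t))
        - ζ • (‖gradient g (x t)‖⁻¹ • gradient g (x t))⟫ t := fun t ht =>
    (hf.differentiable two_ne_zero).differentiableAt.hasGradientAt.comp_hasDerivAt_inner
      (hx t ht)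
  have hrate : ∀ t ∈ interior (Set.Icc 0 Tsharp),
      deriv (fun s => f (x s)) t ≤ -(A * (1 - ζ)) := by
    intro t ht
    have ht := interior_subset ht
    rw [(hderiv t ht).deriv]
    refine (inner_neg_normalize_sub_smul_normalize_le _ _ hζ0).trans ?_
    nlinarith [hlow t ht]
  have h0 : (0 : ℝ) ∈ Set.Icc 0 Tsharp := ⟨le_rfl, hT⟩
  have hTmem : Tsharp ∈ Set.Icc 0 Tsharp := ⟨hT, le_rfl⟩
  have hdrop := (convex_Icc 0 Tsharp).image_sub_le_mul_sub_of_deriv_le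
    (fun t ht => (hderiv t ht).continuousAt.continuousWithinAt)
    (fun t ht => (hderiv t (interior_subset ht)).differentiableAt.differentiableWithinAt)
    hrate 0 h0 Tsharp hTmem hT
  rw [le_div_iff₀ (mul_pos hA (by linarith))]
  linarith [(abs_le.mp (hbound 0 h0)).2, (abs_le.mp (hbound Tsharp hTmem)).1]

/-- Upper bound on the time to reach the constraint boundary:
if `‖∇f(x(t))‖ ≥ A > 0` and `|f(x(t))| ≤ B` along a GDAM trajectory on
`[0, T♯]`, then `T♯ ≤ 2B/(A(1-ζ))`. -/
theorem gdam_time_to_boundary {n : ℕ}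
    (f g : EuclideanSpace ℝ (Fin n) → ℝ)
    (hf : ContDiff ℝ 2 f) (hg : ContDiff ℝ 2 g)
    (ζ : ℝ) (hζ : ζ ∈ Set.Ico (0 : ℝ) 1)
    (Tsharp : ℝ) (hT : 0 ≤ Tsharp)
    (x : ℝ → EuclideanSpace ℝ (Fin n))
    (hgf : ∀ t ∈ Set.Icc (0 : ℝ) Tsharp, gradient f (x t) ≠ 0)
    (hgg : ∀ t ∈ Set.Icc (0 : ℝ) Tsharp, gradient g (x t) ≠ 0)
    (hx : ∀ t ∈ Set.Icc (0 : ℝ) Tsharp, HasDerivAt x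
      (-(‖gradient f (x t)‖⁻¹ • gradient f (x t))
        - ζ • (‖gradient g (x t)‖⁻¹ • gradient g (x t))) t)
    (A B : ℝ) (hA : 0 < A) (hB : 0 < B)
    (hlow : ∀ t ∈ Set.Icc (0 : ℝ) Tsharp, A ≤ ‖gradient f (x t)‖)
    (hbound : ∀ t ∈ Set.Icc (0 : ℝ) Tsharp, |f (x t)| ≤ B) :
    Tsharp ≤ 2 * B / (A * (1 - ζ)) :=
  gdam_time_to_boundary_general f g hf ζ hζ Tsharp hT x hx A B hA hlow hbound
end

section
/- (Error bound for the logarithmic-barrier formulation with multiple constraints.) Let g₁, …, g_m : E → ℝ be twice continuously differentiable, let Φ(y) = −∑_{i=1}^m log(−g_i(y)) on the open set where all g_i(y) < 0, fix M > 0 and ζ ∈ [0,1). Let x : ℝ → E satisfy x'(t) = −∇f(x(t))/‖∇f(x(t))‖ − ζ·∇Φ(x(t))/‖∇Φ(x(t))‖ on [0,t♯], with ∇f(x(t)) ≠ 0 and ∇Φ(x(t)) ≠ 0 there. Suppose Φ(x(t)) < M for all t ∈ [0,t♯) and Φ(x(t♯)) = M, and write x♯ = x(t♯). Then ⟪∇f(x♯),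 ∇Φ(x♯)⟫/(‖∇f(x♯)‖·‖∇Φ(x♯)‖) ≤ −ζ, and hence ‖∇f(x♯)/‖∇f(x♯)‖ + ∇Φ(x♯)/‖∇Φ(x♯)‖‖ ≤ √(2(1 − ζ)). -/
/-!
At the exit time `t♯` the function `t ↦ Φ (x t)` attains its maximum over `[0, t♯]`, so its
left derivative there, `⟪∇Φ, x'⟫ = -cos θ ‖∇Φ‖ - ζ ‖∇Φ‖`, is nonnegative; this is `cos θ ≤ -ζ`.
For unit vectors `‖û + v̂‖² = 2 + 2 cos θ`, which gives the second bound.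
-/

open RealInnerProductSpace Set

theorem HasDerivAt.nonneg_of_le_on_Ico {h : ℝ → ℝ} {a b d : ℝ} (hab : a < b)
    (hle : ∀ t ∈ Ico a b, h t ≤ h b) (hd : HasDerivAt h d b) : 0 ≤ d := by
  have hmax : IsMaxOn h (Icc a b) b := fun t (ht : t ∈ Icc a b) => by
    rcases eq_or_lt_of_le ht.2 with rfl | htb
    · exact le_refl (h t)
    · exact hle t ⟨ht.1, htb⟩
  have hcone : a - b ∈ posTangentConeAt (Icc a b) b := by
    apply sub_mem_posTangentConeAt_of_segment_subset
    rw [segment_symm, segment_eq_Icc hab.le]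
  have hnonpos : (a - b) * d ≤ 0 := by
    simpa only [ContinuousLinearMap.toSpanSingleton_apply, smul_eq_mul] using
      hmax.localize.hasFDerivWithinAt_nonpos hd.hasFDerivAt.hasFDerivWithinAt hcone
  exact nonneg_of_mul_nonpos_right hnonpos (sub_neg.2 hab)

section

variable {F : Type*} [NormedAddCommGroup F] [InnerProductSpace ℝ F]

theorem real_inner_div_norm_mul_norm_le_neg_of_inner_nonneg {u v : F} {ζ : ℝ}
    (hv : v ≠ 0) (h : 0 ≤ ⟪v, -(‖u‖⁻¹ • u) - ζ • (‖v‖⁻¹ • v)⟫) :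
    ⟪u, v⟫ / (‖u‖ * ‖v‖) ≤ -ζ := by
  have hv' : 0 < ‖v‖ := norm_pos_iff.2 hv
  have hexpand : ⟪v, -(‖u‖⁻¹ • u) - ζ • (‖v‖⁻¹ • v)⟫ = -(⟪u, v⟫ / ‖u‖) - ζ * ‖v‖ := by
    rw [inner_sub_right, inner_neg_right, real_inner_smul_right, real_inner_smul_right,
      real_inner_smul_right, real_inner_self_eq_norm_sq, real_inner_comm]
    field_simp
  rw [← div_div, div_le_iff₀ hv']
  linarith

theorem norm_inv_norm_smul_add_le_sqrt {u v : F} {ζ : ℝ} (hu : u ≠ 0) (hv : v ≠ 0)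
    (h : ⟪u, v⟫ / (‖u‖ * ‖v‖) ≤ -ζ) :
    ‖‖u‖⁻¹ • u + ‖v‖⁻¹ • v‖ ≤ √(2 * (1 - ζ)) := by
  apply Real.le_sqrt_of_sq_le
  have hcos : ⟪‖u‖⁻¹ • u, ‖v‖⁻¹ • v⟫ = ⟪u, v⟫ / (‖u‖ * ‖v‖) := by
    rw [real_inner_smul_left, real_inner_smul_right]
    field_simp
  have hunit {w : F} (hw : w ≠ 0) : ‖‖w‖⁻¹ • w‖ = 1 := by
    rw [norm_smul, norm_inv, norm_norm, inv_mul_cancel₀ (norm_ne_zero_iff.2 hw)]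
  rw [norm_add_sq_real, hunit hu, hunit hv, hcos]
  linarith

end

theorem gdam_barrier_error_bound_general {n : ℕ}
    (f : EuclideanSpace ℝ (Fin n) → ℝ)
    (Φ : EuclideanSpace ℝ (Fin n) → ℝ)
    (M : ℝ)
    (ζ : ℝ)
    (tsharp : ℝ) (ht : 0 < tsharp)
    (x : ℝ → EuclideanSpace ℝ (Fin n))
    (hgf : ∀ t ∈ Set.Icc (0 : ℝ) tsharp, gradient f (x t) ≠ 0)
    (hgΦ : ∀ t ∈ Set.Icc (0 : ℝ) tsharp, gradient Φ (x t) ≠ 0)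
    (hx : ∀ t ∈ Set.Icc (0 : ℝ) tsharp, HasDerivAt x
      (-(‖gradient f (x t)‖⁻¹ • gradient f (x t))
        - ζ • (‖gradient Φ (x t)‖⁻¹ • gradient Φ (x t))) t)
    (hlt : ∀ t ∈ Set.Ico (0 : ℝ) tsharp, Φ (x t) < M)
    (heq : Φ (x tsharp) = M) :
    ⟪gradient f (x tsharp), gradient Φ (x tsharp)⟫ /
        (‖gradient f (x tsharp)‖ * ‖gradient Φ (x tsharp)‖) ≤ -ζ ∧
      ‖(‖gradient f (x tsharp)‖⁻¹ • gradient f (x tsharp))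
          + (‖gradient Φ (x tsharp)‖⁻¹ • gradient Φ (x tsharp))‖
        ≤ Real.sqrt (2 * (1 - ζ)) := by
  have hts : tsharp ∈ Icc 0 tsharp := right_mem_Icc.2 ht.le
  -- A nonzero gradient is not the junk value, so `Φ` is differentiable at `x tsharp`.
  have hΦ : DifferentiableAt ℝ Φ (x tsharp) :=
    not_imp_comm.1 gradient_eq_zero_of_not_differentiableAt (hgΦ tsharp hts)
  have hchain : HasDerivAt (fun t => Φ (x t))
      ⟪gradient Φ (x tsharp), -(‖gradient f (x tsharp)‖⁻¹ • gradient f (x tsharp))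
        - ζ • (‖gradient Φ (x tsharp)‖⁻¹ • gradient Φ (x tsharp))⟫ tsharp := by
    rw [inner_gradient_left]
    exact hΦ.hasFDerivAt.comp_hasDerivAt tsharp (hx tsharp hts)
  have hslope := hchain.nonneg_of_le_on_Ico ht fun t htI => heq ▸ (hlt t htI).le
  have hcos := real_inner_div_norm_mul_norm_le_neg_of_inner_nonneg
    (hgΦ tsharp hts) hslope
  exact ⟨hcos, norm_inv_norm_smul_add_le_sqrt (hgf tsharp hts) (hgΦ tsharp hts) hcos⟩

/-- Error bound for the logarithmic-barrier formulation with
multiple constraints: at the first time the barrier `Φ` reaches the level `M`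
along the GDAM trajectory, `cos θ(x♯) ≤ -ζ` and the residual of the normalized
central path condition with `Φ` is at most `√(2(1-ζ))`. -/
theorem gdam_barrier_error_bound {n m : ℕ}
    (f : EuclideanSpace ℝ (Fin n) → ℝ)
    (gi : Fin m → EuclideanSpace ℝ (Fin n) → ℝ)
    (hf : ContDiff ℝ 2 f) (hgi : ∀ i, ContDiff ℝ 2 (gi i))
    (Φ : EuclideanSpace ℝ (Fin n) → ℝ)
    (hΦ : ∀ y, Φ y = -∑ i, Real.log (-(gi i y)))
    (M : ℝ) (hM : 0 < M)
    (ζ : ℝ) (hζ : ζ ∈ Set.Ico (0 : ℝ) 1)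
    (tsharp : ℝ) (ht : 0 < tsharp)
    (x : ℝ → EuclideanSpace ℝ (Fin n))
    (hfeas : ∀ t ∈ Set.Icc (0 : ℝ) tsharp, ∀ i, gi i (x t) < 0)
    (hgf : ∀ t ∈ Set.Icc (0 : ℝ) tsharp, gradient f (x t) ≠ 0)
    (hgΦ : ∀ t ∈ Set.Icc (0 : ℝ) tsharp, gradient Φ (x t) ≠ 0)
    (hx : ∀ t ∈ Set.Icc (0 : ℝ) tsharp, HasDerivAt x
      (-(‖gradient f (x t)‖⁻¹ • gradient f (x t))
        - ζ • (‖gradient Φ (x t)‖⁻¹ • gradient Φ (x t))) t)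
    (hlt : ∀ t ∈ Set.Ico (0 : ℝ) tsharp, Φ (x t) < M)
    (heq : Φ (x tsharp) = M) :
    ⟪gradient f (x tsharp), gradient Φ (x tsharp)⟫ /
        (‖gradient f (x tsharp)‖ * ‖gradient Φ (x tsharp)‖) ≤ -ζ ∧
      ‖(‖gradient f (x tsharp)‖⁻¹ • gradient f (x tsharp))
          + (‖gradient Φ (x tsharp)‖⁻¹ • gradient Φ (x tsharp))‖
        ≤ Real.sqrt (2 * (1 - ζ)) :=
  gdam_barrier_error_bound_general f Φ M ζ tsharp ht x hgf hgΦ hx hlt heq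
end

section
/- (L² bound for the gradient along the time-reparameterized Y-system.) Let ζ ∈ [0,1) and let y : [0,∞) → E satisfy y'(τ) = ‖∇f(y(τ))‖ · s_ζ(y(τ)) for all τ ≥ 0, with ∇f(y(τ)) ≠ 0 and ∇g(y(τ)) ≠ 0. Suppose there is M > 0 with f(y(τ)) ≥ f(y(0)) − M for all τ ≥ 0. Then for every T > 0, ∫₀ᵀ ‖∇f(y(τ))‖²·(1 + ζ·cos θ(y(τ))) dτ = f(y(0)) − f(y(T)) ≤ M, and consequently ∫₀^∞ ‖∇f(y(τ))‖² dτ ≤ M/(1 − ζ) < ∞. -/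
/-!
By the chain rule, along the Y-system
`d/dτ f(y) = ⟪∇f(y), y'⟫ = -‖∇f(y)‖² (1 + ζ cos θ(y))`, so the fundamental theorem of
calculus identifies the weighted integral with the decrease `f(y 0) - f(y T) ≤ M`.
As `cos θ ≥ -1`, the weight is at least `1 - ζ > 0`; hence every truncated integral of
`‖∇f(y)‖²` is at most `M / (1 - ζ)`, and monotone convergence gives the half-line bound.
-/

open RealInnerProductSpace Set MeasureTheory Filter

section Gradient

variable {E : Type*} [NormedAddCommGroup E] [InnerProductSpace ℝ E] [CompleteSpace E]
  {f : E → ℝ}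

theorem ContDiff.continuous_gradient {n : WithTop ℕ∞} (hf : ContDiff ℝ n f) (hn : n ≠ 0) :
    Continuous (gradient f) :=
  (InnerProductSpace.toDual ℝ E).symm.continuous.comp (hf.continuous_fderiv hn)

theorem DifferentiableAt.hasDerivAt_comp_curve {y : ℝ → E} {v : E} {t : ℝ}
    (hf : DifferentiableAt ℝ f (y t)) (hy : HasDerivAt y v t) :
    HasDerivAt (fun s => f (y s)) ⟪gradient f (y t), v⟫ t := by
  rw [inner_gradient_left]
  exact hf.hasFDerivAt.comp_hasDerivAt t hy

end Gradient

section Dissipation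

variable {E : Type*} [NormedAddCommGroup E] [InnerProductSpace ℝ E]

/-- The field `s_ζ` at a point where `a = ∇f` and `b = ∇g`. -/
noncomputable def gdamField (ζ : ℝ) (a b : E) : E :=
  -(‖a‖⁻¹ • a) - ζ • (‖b‖⁻¹ • b)

/-- `‖a‖² (1 + ζ cos θ)`, with `θ` the angle between `a = ∇f` and `b = ∇g`. -/
noncomputable def gdamDissipation (ζ : ℝ) (a b : E) : ℝ :=
  ‖a‖ ^ 2 * (1 + ζ * (⟪a, b⟫ / (‖a‖ * ‖b‖)))

theorem real_inner_norm_smul_gdamField (ζ : ℝ) (a b : E) :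
    ⟪a, ‖a‖ • gdamField ζ a b⟫ = -gdamDissipation ζ a b := by
  rcases eq_or_ne a 0 with rfl | ha
  · simp [gdamDissipation]
  rw [gdamField, real_inner_smul_right, inner_sub_right, inner_neg_right, real_inner_smul_right,
    real_inner_smul_right, real_inner_smul_right, real_inner_self_eq_norm_sq, gdamDissipation]
  field_simp
  ring

theorem one_sub_mul_sq_norm_le_gdamDissipation {ζ : ℝ} (hζ : 0 ≤ ζ) (a b : E) :
    (1 - ζ) * ‖a‖ ^ 2 ≤ gdamDissipation ζ a b := by
  have hcos : -1 ≤ ⟪a, b⟫ / (‖a‖ * ‖b‖) :=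
    (abs_le.mp (abs_real_inner_div_norm_mul_norm_le_one a b)).1
  rw [gdamDissipation, mul_comm]
  gcongr
  nlinarith

theorem ContinuousOn.gdamDissipation {ζ : ℝ} {s : Set ℝ} {u v : ℝ → E}
    (hu : ContinuousOn u s) (hv : ContinuousOn v s)
    (hu0 : ∀ t ∈ s, u t ≠ 0) (hv0 : ∀ t ∈ s, v t ≠ 0) :
    ContinuousOn (fun t => gdamDissipation ζ (u t) (v t)) s := by
  refine (hu.norm.pow 2).mul (continuousOn_const.add (continuousOn_const.mul
    ((hu.inner hv).div (hu.norm.mul hv.norm) fun t ht => ?_)))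
  exact mul_ne_zero (norm_ne_zero_iff.mpr (hu0 t ht)) (norm_ne_zero_iff.mpr (hv0 t ht))

end Dissipation

section HalfLine

variable {a : ℝ}

theorem intervalIntegral_eq_sub_of_hasDerivAt_neg {F φ : ℝ → ℝ} {T : ℝ}
    (hF : ∀ t ∈ Ici a, HasDerivAt F (-φ t) t) (hφ : ContinuousOn φ (Ici a)) (hT : a ≤ T) :
    ∫ t in a..T, φ t = F a - F T := by
  have := intervalIntegral.integral_eq_sub_of_hasDerivAt
    (fun t ht => hF t (Icc_subset_Ici_self (by rwa [uIcc_of_le hT] at ht)))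
    ((hφ.mono Icc_subset_Ici_self).intervalIntegrable_of_Icc hT).neg
  rw [intervalIntegral.integral_neg] at this
  linarith

theorem lintegral_Ioi_ofReal_le_of_intervalIntegral_le {h : ℝ → ℝ} {C : ℝ}
    (hc : ContinuousOn h (Ici a)) (h0 : ∀ t ∈ Ioi a, 0 ≤ h t)
    (hle : ∀ T, a ≤ T → ∫ t in a..T, h t ≤ C) :
    ∫⁻ t in Ioi a, ENNReal.ofReal (h t) ≤ ENNReal.ofReal C := by
  have hmeas : AEMeasurable (fun t => ENNReal.ofReal (h t)) (volume.restrict (Ioi a)) :=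
    ((hc.mono Ioi_subset_Ici_self).aemeasurable measurableSet_Ioi).ennreal_ofReal
  refine le_of_tendsto
    ((aecover_Iic tendsto_id).lintegral_tendsto_of_countably_generated hmeas)
    ((eventually_ge_atTop a).mono fun T hT => ?_)
  have hint : IntegrableOn h (Ioc a T) :=
    (hc.mono Icc_subset_Ici_self).integrableOn_Icc.mono_set Ioc_subset_Icc_self
  rw [id_eq, Measure.restrict_restrict measurableSet_Iic, inter_comm, Ioi_inter_Iic,
    ← ofReal_integral_eq_lintegral_ofReal hint
      ((ae_restrict_iff' measurableSet_Ioc).mpr (ae_of_all _ fun t ht => h0 t ht.1)),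
    ← intervalIntegral.integral_of_le hT]
  exact ENNReal.ofReal_le_ofReal (hle T hT)

end HalfLine

theorem gdam_ysystem_l2_bound_general {n : ℕ}
    (f g : EuclideanSpace ℝ (Fin n) → ℝ)
    (hf : ContDiff ℝ 2 f) (hg : ContDiff ℝ 2 g)
    (ζ : ℝ) (hζ : ζ ∈ Set.Ico (0 : ℝ) 1)
    (y : ℝ → EuclideanSpace ℝ (Fin n))
    (hgf : ∀ τ : ℝ, 0 ≤ τ → gradient f (y τ) ≠ 0)
    (hgg : ∀ τ : ℝ, 0 ≤ τ → gradient g (y τ) ≠ 0)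
    (hy : ∀ τ : ℝ, 0 ≤ τ → HasDerivAt y
      (‖gradient f (y τ)‖ •
        (-(‖gradient f (y τ)‖⁻¹ • gradient f (y τ))
          - ζ • (‖gradient g (y τ)‖⁻¹ • gradient g (y τ)))) τ)
    (M : ℝ)
    (hbound : ∀ τ : ℝ, 0 ≤ τ → f (y 0) - M ≤ f (y τ)) :
    (∀ T : ℝ, 0 < T →
      (∫ τ in (0 : ℝ)..T, ‖gradient f (y τ)‖ ^ 2 *
          (1 + ζ * (⟪gradient f (y τ), gradient g (y τ)⟫ /
            (‖gradient f (y τ)‖ * ‖gradient g (y τ)‖))))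
        = f (y 0) - f (y T) ∧
      (∫ τ in (0 : ℝ)..T, ‖gradient f (y τ)‖ ^ 2 *
          (1 + ζ * (⟪gradient f (y τ), gradient g (y τ)⟫ /
            (‖gradient f (y τ)‖ * ‖gradient g (y τ)‖)))) ≤ M) ∧
    ∫⁻ τ in Set.Ioi (0 : ℝ), ENNReal.ofReal (‖gradient f (y τ)‖ ^ 2)
      ≤ ENNReal.ofReal (M / (1 - ζ)) := by
  obtain ⟨hζ0, hζ1⟩ := hζ
  have hyc : ContinuousOn y (Ici 0) := fun τ hτ => (hy τ hτ).continuousAt.continuousWithinAt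
  have hGf := (hf.continuous_gradient two_ne_zero).comp_continuousOn hyc
  have hGg := (hg.continuous_gradient two_ne_zero).comp_continuousOn hyc
  have hsq : ContinuousOn (fun τ => ‖gradient f (y τ)‖ ^ 2) (Ici 0) := hGf.norm.pow 2
  have hdiss : ContinuousOn (fun τ => gdamDissipation ζ (gradient f (y τ)) (gradient g (y τ)))
      (Ici 0) := hGf.gdamDissipation hGg hgf hgg
  have hdecrease (T : ℝ) (hT : 0 ≤ T) :
      ∫ τ in (0 : ℝ)..T, gdamDissipation ζ (gradient f (y τ)) (gradient g (y τ))
        = f (y 0) - f (y T) := by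
    refine intervalIntegral_eq_sub_of_hasDerivAt_neg (F := fun t => f (y t))
      (fun τ hτ => ?_) hdiss hT
    rw [← real_inner_norm_smul_gdamField]
    exact (hf.differentiable two_ne_zero _).hasDerivAt_comp_curve (hy τ hτ)
  have hle (T : ℝ) (hT : 0 ≤ T) :
      ∫ τ in (0 : ℝ)..T, gdamDissipation ζ (gradient f (y τ)) (gradient g (y τ)) ≤ M := by
    linarith [hdecrease T hT, hbound T hT]
  refine ⟨fun T hT => ⟨hdecrease T hT.le, hle T hT.le⟩, ?_⟩
  refine lintegral_Ioi_ofReal_le_of_intervalIntegral_le hsq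
    (fun τ _ => sq_nonneg _) fun T hT => ?_
  rw [le_div_iff₀ (sub_pos.mpr hζ1), mul_comm, ← intervalIntegral.integral_const_mul]
  refine (intervalIntegral.integral_mono_on hT ?_ ?_ fun τ _ =>
    one_sub_mul_sq_norm_le_gdamDissipation hζ0 _ _).trans (hle T hT)
  · exact ((hsq.const_smul (1 - ζ)).mono Icc_subset_Ici_self).intervalIntegrable_of_Icc hT
  · exact (hdiss.mono Icc_subset_Ici_self).intervalIntegrable_of_Icc hT

/-- L² bound for the gradient along the time-reparameterized
Y-system: for every `T > 0`,
`∫₀ᵀ ‖∇f(y)‖² (1 + ζ cos θ(y)) dτ = f(y(0)) - f(y(T)) ≤ M`, and consequently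
`∫₀^∞ ‖∇f(y)‖² dτ ≤ M/(1-ζ) < ∞`. -/
theorem gdam_ysystem_l2_bound {n : ℕ}
    (f g : EuclideanSpace ℝ (Fin n) → ℝ)
    (hf : ContDiff ℝ 2 f) (hg : ContDiff ℝ 2 g)
    (ζ : ℝ) (hζ : ζ ∈ Set.Ico (0 : ℝ) 1)
    (y : ℝ → EuclideanSpace ℝ (Fin n))
    (hgf : ∀ τ : ℝ, 0 ≤ τ → gradient f (y τ) ≠ 0)
    (hgg : ∀ τ : ℝ, 0 ≤ τ → gradient g (y τ) ≠ 0)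
    (hy : ∀ τ : ℝ, 0 ≤ τ → HasDerivAt y
      (‖gradient f (y τ)‖ •
        (-(‖gradient f (y τ)‖⁻¹ • gradient f (y τ))
          - ζ • (‖gradient g (y τ)‖⁻¹ • gradient g (y τ)))) τ)
    (M : ℝ) (hM : 0 < M)
    (hbound : ∀ τ : ℝ, 0 ≤ τ → f (y 0) - M ≤ f (y τ)) :
    (∀ T : ℝ, 0 < T →
      (∫ τ in (0 : ℝ)..T, ‖gradient f (y τ)‖ ^ 2 *
          (1 + ζ * (⟪gradient f (y τ), gradient g (y τ)⟫ /
            (‖gradient f (y τ)‖ * ‖gradient g (y τ)‖))))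
        = f (y 0) - f (y T) ∧
      (∫ τ in (0 : ℝ)..T, ‖gradient f (y τ)‖ ^ 2 *
          (1 + ζ * (⟪gradient f (y τ), gradient g (y τ)⟫ /
            (‖gradient f (y τ)‖ * ‖gradient g (y τ)‖)))) ≤ M) ∧
    ∫⁻ τ in Set.Ioi (0 : ℝ), ENNReal.ofReal (‖gradient f (y τ)‖ ^ 2)
      ≤ ENNReal.ofReal (M / (1 - ζ)) :=
  gdam_ysystem_l2_bound_general f g hf hg ζ hζ y hgf hgg hy M hbound
end

section
/- (Equivalence of the MSDM search direction and the GDAM direction.) Let a and b be unit vectors in a real inner product space with c₀ = ⟪a, b⟫ satisfying −1 < c₀ < 1, and let v₁ = (−a + b)/√(2 − 2c₀), v₂ = (−a − b)/√(2 + 2c₀). Then for every c ≥ 1, the MSDM search direction s_c = √((1 − c₀)/2)·v₁ + c·√((1 + c₀)/2)·v₂ satisfies s_c = −a − ((c − 1)/2)·(a + b) = ((c + 1)/2)·(−a − ζ·b), where ζ = (c − 1)/(c + 1) ∈ [0, 1). In particular s_c is a positive scalar multiple of the GDAM direction −a − ζ·b. -/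
/-!
The coefficient `√((1 ∓ c₀)/2)` in front of `v₁`, `v₂` is exactly half of the normalising
factor `√(2 ∓ 2c₀)`, so `s_c = ½ (-a + b) + (c/2) (-a - b)`; the rest is linear algebra,
and factoring out `(c + 1)/2` exhibits the GDAM weight `ζ = (c - 1)/(c + 1)`.
-/

open RealInnerProductSpace

lemma Real.sqrt_mul_inv_sqrt_four_mul {x : ℝ} (hx : 0 < x) : √x * (√(4 * x))⁻¹ = 1 / 2 := by
  have hsx : 0 < √x := Real.sqrt_pos.mpr hx
  rw [Real.sqrt_mul (by norm_num), show (4 : ℝ) = 2 ^ 2 by norm_num,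
    Real.sqrt_sq (by norm_num)]
  field_simp

section Directions

variable {V : Type*} [AddCommGroup V] [Module ℝ V]

lemma half_smul_add_half_mul_smul_eq (a b : V) (c : ℝ) :
    (1 / 2 : ℝ) • (-a + b) + (c / 2) • (-a - b) = -a - ((c - 1) / 2) • (a + b) := by
  match_scalars <;> ring

lemma msdm_direction_eq (a b : V) {c₀ : ℝ} (hc1 : -1 < c₀) (hc2 : c₀ < 1) (c : ℝ) :
    √((1 - c₀) / 2) • ((√(2 - 2 * c₀))⁻¹ • (-a + b))
        + (c * √((1 + c₀) / 2)) • ((√(2 + 2 * c₀))⁻¹ • (-a - b))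
      = -a - ((c - 1) / 2) • (a + b) := by
  have hminus : √((1 - c₀) / 2) * (√(2 - 2 * c₀))⁻¹ = 1 / 2 := by
    rw [show 2 - 2 * c₀ = 4 * ((1 - c₀) / 2) by ring]
    exact Real.sqrt_mul_inv_sqrt_four_mul (by linarith)
  have hplus : √((1 + c₀) / 2) * (√(2 + 2 * c₀))⁻¹ = 1 / 2 := by
    rw [show 2 + 2 * c₀ = 4 * ((1 + c₀) / 2) by ring]
    exact Real.sqrt_mul_inv_sqrt_four_mul (by linarith)
  rw [smul_smul, smul_smul, hminus, mul_assoc, hplus, mul_one_div]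
  exact half_smul_add_half_mul_smul_eq a b c

lemma neg_sub_smul_add_eq_smul_gdam (a b : V) {c : ℝ} (hc : c + 1 ≠ 0) :
    -a - ((c - 1) / 2) • (a + b) = ((c + 1) / 2) • (-a - ((c - 1) / (c + 1)) • b) := by
  match_scalars <;> field_simp; ring

end Directions

lemma sub_one_div_add_one_mem_Ico {c : ℝ} (hc : 1 ≤ c) : (c - 1) / (c + 1) ∈ Set.Ico (0 : ℝ) 1 :=
  ⟨div_nonneg (by linarith) (by linarith), (div_lt_one (by linarith)).mpr (by linarith)⟩

theorem msdm_eq_gdam_general {E : Type*}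
    [NormedAddCommGroup E] [InnerProductSpace ℝ E]
    (a b : E)
    (c₀ : ℝ) (hc1 : -1 < c₀) (hc2 : c₀ < 1)
    (c : ℝ) (hc : 1 ≤ c) :
    Real.sqrt ((1 - c₀) / 2) • ((Real.sqrt (2 - 2 * c₀))⁻¹ • (-a + b))
        + (c * Real.sqrt ((1 + c₀) / 2)) •
          ((Real.sqrt (2 + 2 * c₀))⁻¹ • (-a - b))
      = -a - ((c - 1) / 2) • (a + b) ∧
    -a - ((c - 1) / 2) • (a + b)
      = ((c + 1) / 2) • (-a - ((c - 1) / (c + 1)) • b) ∧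
    (c - 1) / (c + 1) ∈ Set.Ico (0 : ℝ) 1 :=
  ⟨msdm_direction_eq a b hc1 hc2 c,
    neg_sub_smul_add_eq_smul_gdam a b (by linarith),
    sub_one_div_add_one_mem_Ico hc⟩

/-- Equivalence of the MSDM search direction and the GDAM
direction: for unit vectors `a`, `b` with `c₀ = ⟪a,b⟫ ∈ (-1,1)` and `c ≥ 1`,
the MSDM direction `s_c = √((1-c₀)/2)·v₁ + c·√((1+c₀)/2)·v₂` equals
`-a - ((c-1)/2)·(a+b) = ((c+1)/2)·(-a - ζ·b)` with `ζ = (c-1)/(c+1) ∈ [0,1)`. -/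
theorem msdm_eq_gdam {E : Type*}
    [NormedAddCommGroup E] [InnerProductSpace ℝ E]
    (a b : E) (ha : ‖a‖ = 1) (hb : ‖b‖ = 1)
    (c₀ : ℝ) (hc₀ : c₀ = ⟪a, b⟫) (hc1 : -1 < c₀) (hc2 : c₀ < 1)
    (c : ℝ) (hc : 1 ≤ c) :
    Real.sqrt ((1 - c₀) / 2) • ((Real.sqrt (2 - 2 * c₀))⁻¹ • (-a + b))
        + (c * Real.sqrt ((1 + c₀) / 2)) •
          ((Real.sqrt (2 + 2 * c₀))⁻¹ • (-a - b))
      = -a - ((c - 1) / 2) • (a + b) ∧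
    -a - ((c - 1) / 2) • (a + b)
      = ((c + 1) / 2) • (-a - ((c - 1) / (c + 1)) • b) ∧
    (c - 1) / (c + 1) ∈ Set.Ico (0 : ℝ) 1 :=
  msdm_eq_gdam_general a b c₀ hc1 hc2 c hc
end
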